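/- For the parabolic maximal operator P_δ and g = 1_S where S = {(x, a x² + s) : x ∈ [0,1], a ∈ [1, 1+δ'], |s| ≤ δ} is a δ-thickened curved rectangle of aperture-width δ' = δ, one has P_δ g(a) ≳ min(1, (δ/|a−1|)^{1/2}) for a ∈ [1,2], and consequently ‖P_δ g‖_{L^q([1,2])} ≳ δ^{1/q} (for q > 2) while ‖g‖_{L^p} ≲ δ^{1/p}, giving the lower bound B(p,q,δ) ≳ δ^{1/q − 1/p}. -/

import Mathlib

/-!
Test the maximal operator at the base point `0`. For `a ≥ 1` and `t ≤ T` with `(a - 1) T² ≤ δ`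
the parabola of aperture `a` stays within `δ` of the one of aperture `1`, so the whole vertical
segment `{(t, a t² + s) : -δ ≤ s ≤ 0}` lies in `S`; hence `P_δ 1_S (a) ≥ T / 2`. The choice
`T = min 1 (δ / (a - 1))^{1/2}` gives the pointwise bound, and `P_δ 1_S ≥ 1/2` on `[1, 1 + δ]`
gives `‖P_δ 1_S‖_{L^q([1,2])} ≥ δ^{1/q} / 2`. On the other side, `S` lies between the graphs of
`x² - 2δ` and `x² + 3δ` over `[0, 1]`, so `|S| ≤ 5δ` and `‖1_S‖_p ≤ 5 δ^{1/p}`.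
-/

open Set MeasureTheory

/-- The `δ`-thickened parabolic maximal operator. -/
noncomputable def Pop (δ : ℝ) (g : ℝ × ℝ → ℝ) (a : ℝ) : ℝ :=
  ⨆ x : ℝ × ℝ, (2 * δ)⁻¹ *
    ∫ t in (0:ℝ)..1, ∫ s in (-δ)..δ, |g (x.1 + t, x.2 + a * t ^ 2 + s)|

/-- The `δ`-thickened curved rectangle `S` of aperture-width `δ`. -/
def parSet (δ : ℝ) : Set (ℝ × ℝ) :=
  {p : ℝ × ℝ | ∃ x ∈ Icc (0:ℝ) 1, ∃ a ∈ Icc (1:ℝ) (1 + δ), ∃ s : ℝ,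
    |s| ≤ δ ∧ p = (x, a * x ^ 2 + s)}

theorem mul_sub_le_intervalIntegral {f : ℝ → ℝ} {a m b c : ℝ} (ham : a ≤ m) (hmb : m ≤ b)
    (hf : IntervalIntegrable f volume a b) (hc : ∀ x ∈ Icc a m, c ≤ f x)
    (hf0 : ∀ x ∈ Icc m b, 0 ≤ f x) : c * (m - a) ≤ ∫ x in a..b, f x := by
  have ham' : IntervalIntegrable f volume a m :=
    hf.mono_set (uIcc_subset_uIcc_left (by rw [uIcc_of_le (ham.trans hmb)]; exact ⟨ham, hmb⟩))
  have hmb' : IntervalIntegrable f volume m b :=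
    hf.mono_set (uIcc_subset_uIcc_right (by rw [uIcc_of_le (ham.trans hmb)]; exact ⟨ham, hmb⟩))
  rw [← intervalIntegral.integral_add_adjacent_intervals ham' hmb']
  have h₁ : c * (m - a) ≤ ∫ x in a..m, f x := by
    simpa [mul_comm] using intervalIntegral.integral_mono_on ham intervalIntegrable_const ham' hc
  have h₂ : 0 ≤ ∫ x in m..b, f x := intervalIntegral.integral_nonneg hmb hf0
  linarith

theorem abs_indicator_one_le_one {α : Type*} (s : Set α) (p : α) :
    |s.indicator (fun _ => (1:ℝ)) p| ≤ 1 := by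
  simpa only [Real.norm_eq_abs, abs_one] using norm_indicator_le_norm_self (fun _ => (1:ℝ)) p

section ParabolicAverage

variable (δ : ℝ) (g : ℝ × ℝ → ℝ) (a : ℝ) (x : ℝ × ℝ)

noncomputable def stripIntegral (t : ℝ) : ℝ :=
  ∫ s in (-δ)..δ, |g (x.1 + t, x.2 + a * t ^ 2 + s)|

noncomputable def parabolicAverage : ℝ :=
  (2 * δ)⁻¹ * ∫ t in (0:ℝ)..1, stripIntegral δ g a x t

variable {δ g}

theorem stripIntegral_nonneg (hδ : 0 ≤ δ) (t : ℝ) : 0 ≤ stripIntegral δ g a x t :=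
  intervalIntegral.integral_nonneg (by linarith) fun _ _ => abs_nonneg _

theorem stripIntegral_le {M : ℝ} (hg : ∀ p, |g p| ≤ M) (hδ : 0 ≤ δ) (t : ℝ) :
    stripIntegral δ g a x t ≤ 2 * δ * M := by
  have h := intervalIntegral.norm_integral_le_of_norm_le_const (a := -δ) (b := δ)
    (f := fun s => |g (x.1 + t, x.2 + a * t ^ 2 + s)|) fun s _ => by
      simpa only [Real.norm_eq_abs, abs_abs] using hg _
  rw [Real.norm_eq_abs, show δ - -δ = 2 * δ by ring, abs_of_nonneg (by linarith : 0 ≤ 2 * δ)] at h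
  exact (le_abs_self _).trans (h.trans_eq (mul_comm _ _))

theorem measurable_stripIntegral (hg : Measurable g) : Measurable (stripIntegral δ g a x) := by
  have hF : StronglyMeasurable (Function.uncurry fun t s => |g (x.1 + t, x.2 + a * t ^ 2 + s)|) :=
    (hg.comp (by fun_prop)).abs.stronglyMeasurable
  -- `∫ s in b..c` unfolds to the difference of the integrals over `Ioc b c` and `Ioc c b`
  exact (hF.integral_prod_right.measurable).sub hF.integral_prod_right.measurable

theorem intervalIntegrable_stripIntegral {M : ℝ} (hg : Measurable g) (hgM : ∀ p, |g p| ≤ M)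
    (hδ : 0 ≤ δ) (b c : ℝ) : IntervalIntegrable (stripIntegral δ g a x) volume b c :=
  intervalIntegrable_const.mono_fun' (measurable_stripIntegral a x hg).aestronglyMeasurable
    (ae_of_all _ fun t => show ‖_‖ ≤ 2 * δ * M by
      rw [Real.norm_eq_abs, abs_of_nonneg (stripIntegral_nonneg a x hδ t)]
      exact stripIntegral_le a x hgM hδ t)

theorem parabolicAverage_le {M : ℝ} (hgM : ∀ p, |g p| ≤ M) (hδ : 0 < δ) :
    parabolicAverage δ g a x ≤ M := by
  have h := intervalIntegral.norm_integral_le_of_norm_le_const (a := 0) (b := 1)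
    (f := stripIntegral δ g a x) fun t _ => by
      rw [Real.norm_eq_abs, abs_of_nonneg (stripIntegral_nonneg a x hδ.le t)]
      exact stripIntegral_le a x hgM hδ.le t
  rw [Real.norm_eq_abs, sub_zero, abs_one, mul_one] at h
  calc parabolicAverage δ g a x ≤ (2 * δ)⁻¹ * (2 * δ * M) :=
        mul_le_mul_of_nonneg_left ((le_abs_self _).trans h) (by positivity)
    _ = M := by field_simp

theorem parabolicAverage_le_Pop {M : ℝ} (hgM : ∀ p, |g p| ≤ M) (hδ : 0 < δ) :
    parabolicAverage δ g a x ≤ Pop δ g a :=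
  le_ciSup ⟨M, forall_mem_range.2 fun y => parabolicAverage_le a y hgM hδ⟩ x

theorem Pop_nonneg (hδ : 0 ≤ δ) : 0 ≤ Pop δ g a :=
  Real.iSup_nonneg fun x => mul_nonneg (by positivity)
    (intervalIntegral.integral_nonneg zero_le_one fun t _ => stripIntegral_nonneg a x hδ t)

theorem le_Pop_of_le_stripIntegral {M T c : ℝ} (hg : Measurable g) (hgM : ∀ p, |g p| ≤ M)
    (hδ : 0 < δ) (hT₀ : 0 ≤ T) (hT₁ : T ≤ 1) (hc : ∀ t ∈ Icc 0 T, c ≤ stripIntegral δ g a x t) :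
    (2 * δ)⁻¹ * (c * T) ≤ Pop δ g a := by
  refine le_trans (mul_le_mul_of_nonneg_left ?_ (by positivity))
    (parabolicAverage_le_Pop a x hgM hδ)
  simpa using mul_sub_le_intervalIntegral hT₀ hT₁
    (intervalIntegrable_stripIntegral a x hg hgM hδ.le 0 1) hc
    fun t _ => stripIntegral_nonneg a x hδ.le t

end ParabolicAverage

section CurvedRectangle

variable {δ : ℝ}

theorem mem_parSet_iff (hδ : 0 ≤ δ) {p : ℝ × ℝ} :
    p ∈ parSet δ ↔ p.1 ∈ Icc 0 1 ∧ p.2 ∈ Icc (p.1 ^ 2 - δ) ((1 + δ) * p.1 ^ 2 + δ) := by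
  obtain ⟨x, y⟩ := p
  simp only [parSet, mem_ofPred_eq, mem_Icc, Prod.mk.injEq, abs_le]
  constructor
  · rintro ⟨x, hx, b, ⟨hb₁, hb₂⟩, s, ⟨hs₁, hs₂⟩, rfl, rfl⟩
    exact ⟨hx, by nlinarith [sq_nonneg x], by nlinarith [sq_nonneg x]⟩
  · rintro ⟨hx, hlo, hhi⟩
    refine ⟨x, hx, ?_⟩
    by_cases hy : y ≤ x ^ 2 + δ
    · exact ⟨1, ⟨le_rfl, by linarith⟩, y - x ^ 2, ⟨by linarith, by linarith⟩, rfl, by ring⟩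
    · -- above the band of aperture `1`: take `s = δ` and solve for the aperture
      have hx₂ : 0 < x ^ 2 := by nlinarith [sq_nonneg x]
      refine ⟨(y - δ) / x ^ 2, ⟨?_, ?_⟩, δ, ⟨by linarith, le_rfl⟩, rfl, ?_⟩
      · rw [le_div_iff₀ hx₂]; linarith
      · rw [div_le_iff₀ hx₂]; linarith
      · rw [div_mul_cancel₀ _ hx₂.ne']; ring

theorem measurableSet_parSet (hδ : 0 ≤ δ) : MeasurableSet (parSet δ) := by
  rw [show parSet δ = _ from Set.ext fun p => mem_parSet_iff hδ]
  exact measurableSet_region_between_cc (f := fun x => x ^ 2 - δ)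
    (g := fun x => (1 + δ) * x ^ 2 + δ) (by fun_prop) (by fun_prop) measurableSet_Icc

theorem volume_parSet_le (hδ : 0 < δ) : volume (parSet δ) ≤ ENNReal.ofReal (5 * δ) := by
  set R := regionBetween (fun x => x ^ 2 - 2 * δ) (fun x => x ^ 2 + 3 * δ) (Icc 0 1)
  have hsub : parSet δ ⊆ R := by
    rintro p hp
    obtain ⟨hx, hlo, hhi⟩ := (mem_parSet_iff hδ.le).1 hp
    have hx₂ : δ * p.1 ^ 2 ≤ δ := mul_le_of_le_one_right hδ.le (pow_le_one₀ hx.1 hx.2)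
    exact ⟨hx, by linarith, by linarith⟩
  calc volume (parSet δ) ≤ volume R := measure_mono hsub
    _ = ∫⁻ x in Icc (0:ℝ) 1, ENNReal.ofReal ((x ^ 2 + 3 * δ) - (x ^ 2 - 2 * δ)) := by
        rw [Measure.volume_eq_prod]
        exact volume_regionBetween_eq_lintegral (by fun_prop) (by fun_prop) measurableSet_Icc
    _ = ENNReal.ofReal (5 * δ) := by
        simp_rw [show ∀ x : ℝ, x ^ 2 + 3 * δ - (x ^ 2 - 2 * δ) = 5 * δ from fun x => by ring]
        simp

theorem delta_le_stripIntegral_indicator_parSet (hδ : 0 < δ) {a t : ℝ} (ha : 1 ≤ a)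
    (ht : t ∈ Icc 0 1) (hclose : (a - 1) * t ^ 2 ≤ δ) :
    δ ≤ stripIntegral δ ((parSet δ).indicator fun _ => (1:ℝ)) a 0 t := by
  have hmeas : Measurable fun s => |(parSet δ).indicator (fun _ => (1:ℝ)) (t, a * t ^ 2 + s)| :=
    ((measurable_const.indicator (measurableSet_parSet hδ.le)).comp (by fun_prop)).abs
  have hone : ∀ s ∈ Icc (-δ) 0,
      1 ≤ |(parSet δ).indicator (fun _ => (1:ℝ)) (t, a * t ^ 2 + s)| := by
    rintro s ⟨hs₁, hs₂⟩
    have hmem : (t, a * t ^ 2 + s) ∈ parSet δ := by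
      rw [mem_parSet_iff hδ.le]
      exact ⟨ht, by nlinarith [sq_nonneg t], by nlinarith [sq_nonneg t]⟩
    simp [hmem]
  simpa [stripIntegral] using mul_sub_le_intervalIntegral (neg_nonpos.2 hδ.le) hδ.le
    (intervalIntegrable_const.mono_fun' hmeas.aestronglyMeasurable
      (ae_of_all _ fun s => show ‖_‖ ≤ 1 by simpa using abs_indicator_one_le_one _ _)) hone
    fun s _ => abs_nonneg _

theorem half_mul_le_Pop_indicator_parSet (hδ : 0 < δ) {a T : ℝ} (ha : 1 ≤ a) (hT₀ : 0 ≤ T)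
    (hT₁ : T ≤ 1) (hclose : (a - 1) * T ^ 2 ≤ δ) :
    T / 2 ≤ Pop δ ((parSet δ).indicator fun _ => (1:ℝ)) a := by
  have h := le_Pop_of_le_stripIntegral a 0
    (measurable_const.indicator (measurableSet_parSet hδ.le)) (abs_indicator_one_le_one _) hδ
    hT₀ hT₁ fun t ht =>
      delta_le_stripIntegral_indicator_parSet hδ ha ⟨ht.1, ht.2.trans hT₁⟩
        (le_trans (mul_le_mul_of_nonneg_left (pow_le_pow_left₀ ht.1 ht.2 2) (by linarith)) hclose)
  calc T / 2 = (2 * δ)⁻¹ * (δ * T) := by field_simp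
    _ ≤ _ := h

theorem half_le_Pop_indicator_parSet (hδ : 0 < δ) {a : ℝ} (ha : a ∈ Icc 1 (1 + δ)) :
    1 / 2 ≤ Pop δ ((parSet δ).indicator fun _ => (1:ℝ)) a :=
  half_mul_le_Pop_indicator_parSet hδ ha.1 zero_le_one le_rfl (by nlinarith [ha.2])

theorem min_one_sqrt_div_two_le_Pop_indicator_parSet (hδ : 0 < δ) {a : ℝ} (ha : 1 < a) :
    min 1 (Real.sqrt (δ / (a - 1))) / 2 ≤ Pop δ ((parSet δ).indicator fun _ => (1:ℝ)) a := by
  set T := min 1 (Real.sqrt (δ / (a - 1)))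
  have hT₀ : 0 ≤ T := le_min zero_le_one (Real.sqrt_nonneg _)
  refine half_mul_le_Pop_indicator_parSet hδ ha.le hT₀ (min_le_left _ _) ?_
  calc (a - 1) * T ^ 2 ≤ (a - 1) * Real.sqrt (δ / (a - 1)) ^ 2 :=
        mul_le_mul_of_nonneg_left (pow_le_pow_left₀ hT₀ (min_le_right _ _) 2) (by linarith)
    _ = δ := by
        rw [Real.sq_sqrt (div_nonneg hδ.le (by linarith))]
        field_simp [(sub_pos.2 ha).ne']

theorem eLpNorm_indicator_parSet_le (hδ : 0 < δ) {p : ℝ} (hp : 1 ≤ p) :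
    eLpNorm ((parSet δ).indicator fun _ => (1:ℝ)) (ENNReal.ofReal p) volume ≤
      ENNReal.ofReal (5 * δ ^ (1 / p)) := by
  have hp₀ : 0 < p := by linarith
  rw [eLpNorm_indicator_const (measurableSet_parSet hδ.le) (by simpa using hp₀)
    ENNReal.ofReal_ne_top, ENNReal.toReal_ofReal hp₀.le, enorm_one, one_mul]
  have h5 : (5:ℝ) ^ (1 / p) ≤ 5 :=
    Real.rpow_le_self_of_one_le (by norm_num) ((div_le_one hp₀).2 hp)
  calc volume (parSet δ) ^ (1 / p) ≤ ENNReal.ofReal (5 * δ) ^ (1 / p) :=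
        ENNReal.rpow_le_rpow (volume_parSet_le hδ) (by positivity)
    _ = ENNReal.ofReal (5 ^ (1 / p) * δ ^ (1 / p)) := by
        rw [ENNReal.ofReal_rpow_of_pos (by positivity), Real.mul_rpow (by norm_num) hδ.le]
    _ ≤ ENNReal.ofReal (5 * δ ^ (1 / p)) :=
        ENNReal.ofReal_le_ofReal (mul_le_mul_of_nonneg_right h5 (by positivity))

theorem rpow_div_two_le_eLpNorm_Pop_indicator_parSet (hδ : 0 < δ) (hδ₁ : δ ≤ 1) {q : ℝ}
    (hq : 0 < q) :
    ENNReal.ofReal (δ ^ (1 / q) / 2) ≤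
      eLpNorm (Pop δ ((parSet δ).indicator fun _ => (1:ℝ))) (ENNReal.ofReal q)
        (volume.restrict (Icc 1 2)) := by
  have hle : ∀ a, ‖(Icc 1 (1 + δ)).indicator (fun _ => (1 / 2 : ℝ)) a‖ ≤
      ‖Pop δ ((parSet δ).indicator fun _ => (1:ℝ)) a‖ := by
    intro a
    rw [Real.norm_eq_abs, Real.norm_eq_abs, abs_of_nonneg (Pop_nonneg a hδ.le)]
    by_cases ha : a ∈ Icc 1 (1 + δ)
    · simpa [ha] using half_le_Pop_indicator_parSet hδ ha
    · simpa [ha] using Pop_nonneg a hδ.le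
  refine le_trans (le_of_eq ?_) (eLpNorm_mono hle)
  rw [eLpNorm_indicator_const measurableSet_Icc (by simpa using hq) ENNReal.ofReal_ne_top,
    ENNReal.toReal_ofReal hq.le, Measure.restrict_apply measurableSet_Icc,
    inter_eq_left.2 (Icc_subset_Icc le_rfl (by linarith)), Real.volume_Icc, add_sub_cancel_left,
    ENNReal.ofReal_rpow_of_pos hδ, Real.enorm_eq_ofReal (by norm_num),
    ← ENNReal.ofReal_mul (by norm_num), one_div_mul_eq_div]

end CurvedRectangle

/-- For `g = 1_S`, `S` the `δ`-thickened curved rectangle of aperture-width `δ`: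
`P_δ g(a) ≳ min(1, (δ/(a−1))^{1/2})` for `a ∈ (1,2]` (and `P_δ g(1) ≳ 1`), hence
`‖P_δ g‖_{L^q([1,2])} ≳ δ^{1/q}` for `q > 2` while `‖g‖_p ≲ δ^{1/p}`, giving
`B(p,q,δ) ≳ δ^{1/q − 1/p}`. -/
theorem stmt19 :
    ∃ K > (0:ℝ), ∃ C > (0:ℝ), ∀ δ : ℝ, 0 < δ → δ < 1 →
      (∀ a ∈ Icc (1:ℝ) 2, 1 < a →
        K * min 1 (Real.sqrt (δ / (a - 1))) ≤
          Pop δ ((parSet δ).indicator fun _ => (1:ℝ)) a) ∧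
      (K ≤ Pop δ ((parSet δ).indicator fun _ => (1:ℝ)) 1) ∧
      (∀ p q : ℝ, 1 ≤ p → 2 < q →
        eLpNorm ((parSet δ).indicator fun _ => (1:ℝ)) (ENNReal.ofReal p) volume ≤
          ENNReal.ofReal (C * δ ^ (1 / p)) ∧
        ENNReal.ofReal (K * δ ^ (1 / q)) ≤
          eLpNorm (Pop δ ((parSet δ).indicator fun _ => (1:ℝ)))
            (ENNReal.ofReal q) (volume.restrict (Icc (1:ℝ) 2)) ∧
        ENNReal.ofReal (K * δ ^ (1 / q - 1 / p)) ≤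
          eLpNorm (Pop δ ((parSet δ).indicator fun _ => (1:ℝ)))
              (ENNReal.ofReal q) (volume.restrict (Icc (1:ℝ) 2)) /
            eLpNorm ((parSet δ).indicator fun _ => (1:ℝ))
              (ENNReal.ofReal p) volume) := by
  refine ⟨1 / 10, by norm_num, 5, by norm_num, fun δ hδ hδ₁ => ⟨?_, ?_, fun p q hp hq => ?_⟩⟩
  · rintro a - ha
    have h := min_one_sqrt_div_two_le_Pop_indicator_parSet hδ ha
    have h₀ : 0 ≤ min 1 (Real.sqrt (δ / (a - 1))) := le_min zero_le_one (Real.sqrt_nonneg _)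
    linarith
  · linarith [half_le_Pop_indicator_parSet hδ ⟨le_rfl, by linarith⟩]
  have hg := eLpNorm_indicator_parSet_le hδ hp
  have hP := rpow_div_two_le_eLpNorm_Pop_indicator_parSet hδ hδ₁.le (by linarith : 0 < q)
  refine ⟨hg, le_trans (ENNReal.ofReal_le_ofReal ?_) hP,
    le_trans (le_of_eq ?_) (ENNReal.div_le_div hP hg)⟩
  · linarith [Real.rpow_nonneg hδ.le (1 / q)]
  · rw [← ENNReal.ofReal_div_of_pos (by positivity), Real.rpow_sub hδ]
    congr 1
    field_simp
    ring
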